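/- Let k ≥ 1 be an integer and let 0 < b < a be reals. Define P : (0,∞) → ℝ by P(ρ) = G_k(a/ρ) − G_k(b/ρ). Then, with ρ_max = (a − b)/(k · log(a/b)), the function P is strictly increasing on (0, ρ_max] and strictly decreasing on [ρ_max, ∞); moreover P(ρ) → 0 as ρ → 0⁺ and P(ρ) → 0 as ρ → ∞. -/

import Mathlib

open MeasureTheory ProbabilityTheory

/-- The cumulative distribution function of the chi-squared distribution with `k` degrees of
freedom, i.e. of the Gamma distribution with shape `k/2` and rate `1/2`. -/
noncomputable def chisqCDF (k : ℕ) (x : ℝ) : ℝ :=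
  ((gammaMeasure ((k : ℝ) / 2) (1 / 2)) (Set.Iic x)).toReal

open Set Filter Topology Real

/-! With `G` the cdf and `g` the density of `Gamma(s, r)`, `d/dρ G(c/ρ) = -(c/ρ) g(c/ρ) / ρ`,
and `x g(x)` is a positive multiple of `x^s e^{-rx}`. Hence the derivative of
`ρ ↦ G(a/ρ) - G(b/ρ)` has the sign of `r (a - b) / ρ - s log (a/b)`, which changes sign
exactly once, at `ρ = r (a - b) / (s log (a/b))`; for `χ²_k` (`s = k/2`, `r = 1/2`) this is
`(a - b) / (k log (a/b))`. The limits come from `G(+∞) = 1` and right-continuity of `G` at `0`. -/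

theorem hasDerivAt_integral_Iic {f : ℝ → ℝ} {x : ℝ} (hf : Integrable f)
    (hfx : ContinuousAt f x) :
    HasDerivAt (fun y ↦ ∫ t in Iic y, f t) (f x) x := by
  have hsplit :
      (fun y ↦ ∫ t in Iic y, f t) = fun y ↦ (∫ t in Iic x, f t) + ∫ t in x..y, f t := by
    funext y
    rw [← intervalIntegral.integral_Iic_sub_Iic hf.integrableOn hf.integrableOn, add_sub_cancel]
  rw [hsplit]
  exact (intervalIntegral.integral_hasDerivAt_right hf.intervalIntegrable
    hf.aestronglyMeasurable.stronglyMeasurableAtFilter hfx).const_add _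

theorem rpow_mul_exp_neg_mul_lt_iff {s r x y : ℝ} (hx : 0 < x) (hy : 0 < y) :
    x ^ s * exp (-(r * x)) < y ^ s * exp (-(r * y)) ↔ s * log (x / y) < r * (x - y) := by
  rw [rpow_def_of_pos hx, rpow_def_of_pos hy, ← exp_add, ← exp_add, exp_lt_exp,
    log_div hx.ne' hy.ne']
  constructor <;> intro h <;> linarith

theorem StieltjesFunction.tendsto_div_atTop (f : StieltjesFunction ℝ) {c : ℝ} (hc : 0 ≤ c) :
    Tendsto (fun ρ ↦ f (c / ρ)) atTop (𝓝 (f 0)) := by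
  have hdiv : Tendsto (fun ρ : ℝ ↦ c / ρ) atTop (𝓝[≥] 0) := by
    refine tendsto_nhdsWithin_of_tendsto_nhds_of_eventually_within _ ?_ ?_
    · simpa only [div_eq_mul_inv, mul_zero] using tendsto_inv_atTop_zero.const_mul c
    · filter_upwards [eventually_ge_atTop 0] with ρ hρ using div_nonneg hc hρ
  exact (f.right_continuous 0).tendsto.comp hdiv

namespace ProbabilityTheory

theorem integrable_gammaPDFReal {a r : ℝ} (ha : 0 < a) (hr : 0 < r) :
    Integrable (gammaPDFReal a r) := by
  refine ⟨(measurable_gammaPDFReal a r).aestronglyMeasurable, ?_⟩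
  rw [hasFiniteIntegral_iff_ofReal (ae_of_all _ (gammaPDFReal_nonneg ha hr))]
  exact (lintegral_gammaPDF_eq_one ha hr).trans_lt ENNReal.one_lt_top

theorem continuousAt_gammaPDFReal {a r x : ℝ} (hx : 0 < x) :
    ContinuousAt (gammaPDFReal a r) x := by
  have hformula : ContinuousAt (fun t ↦ r ^ a / Gamma a * t ^ (a - 1) * exp (-(r * t))) x :=
    (continuousAt_const.mul (continuousAt_rpow_const x _ (.inl hx.ne'))).mul (by fun_prop)
  refine hformula.congr ?_
  filter_upwards [lt_mem_nhds hx] with t ht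
  simp [gammaPDFReal, ht.le]

theorem hasDerivAt_cdf_gammaMeasure {a r x : ℝ} (ha : 0 < a) (hr : 0 < r) (hx : 0 < x) :
    HasDerivAt (cdf (gammaMeasure a r)) (gammaPDFReal a r x) x := by
  rw [funext (cdf_gammaMeasure_eq_integral ha hr)]
  exact hasDerivAt_integral_Iic (integrable_gammaPDFReal ha hr) (continuousAt_gammaPDFReal hx)

theorem mul_gammaPDFReal {a r x : ℝ} (hx : 0 < x) :
    x * gammaPDFReal a r x = r ^ a / Gamma a * (x ^ a * exp (-(r * x))) := by
  rw [gammaPDFReal, if_pos hx.le, rpow_sub_one hx.ne']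
  field_simp

theorem mul_gammaPDFReal_lt_iff {a r x y : ℝ} (ha : 0 < a) (hr : 0 < r) (hx : 0 < x)
    (hy : 0 < y) :
    x * gammaPDFReal a r x < y * gammaPDFReal a r y ↔ a * log (x / y) < r * (x - y) := by
  have hC : 0 < r ^ a / Gamma a := div_pos (rpow_pos_of_pos hr a) (Gamma_pos_of_pos ha)
  rw [mul_gammaPDFReal hx, mul_gammaPDFReal hy, mul_lt_mul_iff_right₀ hC,
    rpow_mul_exp_neg_mul_lt_iff hx hy]

theorem hasDerivAt_cdf_gammaMeasure_div {a r c ρ : ℝ} (ha : 0 < a) (hr : 0 < r) (hc : 0 < c)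
    (hρ : 0 < ρ) :
    HasDerivAt (fun ρ ↦ cdf (gammaMeasure a r) (c / ρ))
      (-(c / ρ * gammaPDFReal a r (c / ρ)) / ρ) ρ := by
  have hdiv := (hasDerivAt_const ρ c).div (hasDerivAt_id ρ) hρ.ne'
  refine ((hasDerivAt_cdf_gammaMeasure ha hr (div_pos hc hρ)).comp ρ hdiv).congr_deriv ?_
  simp only [id]
  field_simp
  ring

section PowerFunction

variable {s r a b : ℝ}

theorem hasDerivAt_cdf_gammaMeasure_div_sub (hs : 0 < s) (hr : 0 < r) (ha : 0 < a) (hb : 0 < b)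
    {ρ : ℝ} (hρ : 0 < ρ) :
    HasDerivAt (fun ρ ↦ cdf (gammaMeasure s r) (a / ρ) - cdf (gammaMeasure s r) (b / ρ))
      ((b / ρ * gammaPDFReal s r (b / ρ) - a / ρ * gammaPDFReal s r (a / ρ)) / ρ) ρ :=
  ((hasDerivAt_cdf_gammaMeasure_div hs hr ha hρ).sub
    (hasDerivAt_cdf_gammaMeasure_div hs hr hb hρ)).congr_deriv (by ring)

theorem strictMonoOn_cdf_gammaMeasure_div_sub (hs : 0 < s) (hr : 0 < r) (hb : 0 < b)
    (hba : b < a) :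
    StrictMonoOn (fun ρ ↦ cdf (gammaMeasure s r) (a / ρ) - cdf (gammaMeasure s r) (b / ρ))
      (Ioc 0 (r * (a - b) / (s * log (a / b)))) := by
  have ha := hb.trans hba
  have hD : 0 < s * log (a / b) := mul_pos hs (log_pos ((one_lt_div hb).mpr hba))
  refine strictMonoOn_of_deriv_pos (convex_Ioc _ _)
    (fun ρ hρ ↦
      (hasDerivAt_cdf_gammaMeasure_div_sub hs hr ha hb hρ.1).continuousAt.continuousWithinAt)
    fun ρ hρ ↦ ?_
  rw [interior_Ioc] at hρ
  obtain ⟨hρ0, hρmode⟩ := hρ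
  rw [(hasDerivAt_cdf_gammaMeasure_div_sub hs hr ha hb hρ0).deriv]
  refine div_pos (sub_pos.mpr ?_) hρ0
  rw [mul_gammaPDFReal_lt_iff hs hr (div_pos ha hρ0) (div_pos hb hρ0),
    div_div_div_cancel_right₀ hρ0.ne', ← sub_div, mul_div_assoc', lt_div_iff₀ hρ0]
  rw [lt_div_iff₀ hD] at hρmode
  linarith

theorem strictAntiOn_cdf_gammaMeasure_div_sub (hs : 0 < s) (hr : 0 < r) (hb : 0 < b)
    (hba : b < a) :
    StrictAntiOn (fun ρ ↦ cdf (gammaMeasure s r) (a / ρ) - cdf (gammaMeasure s r) (b / ρ))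
      (Ici (r * (a - b) / (s * log (a / b)))) := by
  have ha := hb.trans hba
  have hD : 0 < s * log (a / b) := mul_pos hs (log_pos ((one_lt_div hb).mpr hba))
  have hmode : 0 < r * (a - b) / (s * log (a / b)) := div_pos (mul_pos hr (sub_pos.mpr hba)) hD
  refine strictAntiOn_of_deriv_neg (convex_Ici _)
    (fun ρ hρ ↦ (hasDerivAt_cdf_gammaMeasure_div_sub hs hr ha hb
      (hmode.trans_le hρ)).continuousAt.continuousWithinAt)
    fun ρ hρ ↦ ?_
  rw [interior_Ici, mem_Ioi] at hρ
  have hρ0 : 0 < ρ := hmode.trans hρ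
  rw [(hasDerivAt_cdf_gammaMeasure_div_sub hs hr ha hb hρ0).deriv]
  refine div_neg_of_neg_of_pos (sub_neg.mpr ?_) hρ0
  rw [mul_gammaPDFReal_lt_iff hs hr (div_pos hb hρ0) (div_pos ha hρ0),
    div_div_div_cancel_right₀ hρ0.ne', ← sub_div, mul_div_assoc', lt_div_iff₀ hρ0,
    ← inv_div, log_inv]
  rw [div_lt_iff₀ hD] at hρ
  linarith

end PowerFunction

theorem tendsto_cdf_div_nhdsGT_zero (μ : Measure ℝ) {c : ℝ} (hc : 0 < c) :
    Tendsto (fun ρ ↦ cdf μ (c / ρ)) (𝓝[>] 0) (𝓝 1) := by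
  have hdiv : Tendsto (fun ρ : ℝ ↦ c / ρ) (𝓝[>] 0) atTop := by
    simpa only [div_eq_mul_inv] using tendsto_inv_nhdsGT_zero.const_mul_atTop hc
  exact (tendsto_cdf_atTop μ).comp hdiv

end ProbabilityTheory

theorem chisqCDF_eq_cdf {k : ℕ} (hk : 0 < k) :
    chisqCDF k = cdf (gammaMeasure ((k : ℝ) / 2) (1 / 2)) := by
  have := isProbabilityMeasure_gammaMeasure (a := (k : ℝ) / 2) (r := 1 / 2) (by positivity)
    (by norm_num)
  funext x
  rw [chisqCDF, cdf_eq_real, measureReal_def]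

/-- **Unimodality of the χ² equivalence-test power function.** For `0 < b < a` the function
`P ρ = G_k(a/ρ) − G_k(b/ρ)` is strictly increasing on `(0, ρmax]` and strictly decreasing on
`[ρmax, ∞)`, where `ρmax = (a − b)/(k log(a/b))`; moreover `P ρ → 0` as `ρ → 0⁺` and as
`ρ → ∞`. -/
theorem chisq_power_unimodal
    (k : ℕ) (hk : 1 ≤ k) (a b : ℝ) (hb : 0 < b) (hba : b < a)
    (P : ℝ → ℝ) (hP : ∀ ρ, P ρ = chisqCDF k (a / ρ) - chisqCDF k (b / ρ))
    (ρmax : ℝ) (hρmax : ρmax = (a - b) / (k * Real.log (a / b))) :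
    StrictMonoOn P (Set.Ioc 0 ρmax) ∧
    StrictAntiOn P (Set.Ici ρmax) ∧
    Filter.Tendsto P (nhdsWithin 0 (Set.Ioi 0)) (nhds 0) ∧
    Filter.Tendsto P Filter.atTop (nhds 0) := by
  have hs : (0 : ℝ) < k / 2 := by positivity
  have hr : (0 : ℝ) < 1 / 2 := by norm_num
  have ha : 0 < a := hb.trans hba
  set μ := gammaMeasure ((k : ℝ) / 2) (1 / 2)
  have hP' : P = fun ρ ↦ cdf μ (a / ρ) - cdf μ (b / ρ) := by
    funext ρ
    rw [hP, chisqCDF_eq_cdf hk]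
  have hmode : ρmax = 1 / 2 * (a - b) / ((k : ℝ) / 2 * log (a / b)) := by
    rw [hρmax]
    ring
  rw [hP', hmode]
  refine ⟨strictMonoOn_cdf_gammaMeasure_div_sub hs hr hb hba,
    strictAntiOn_cdf_gammaMeasure_div_sub hs hr hb hba, ?_, ?_⟩
  · simpa only [sub_self] using
      (tendsto_cdf_div_nhdsGT_zero μ ha).sub (tendsto_cdf_div_nhdsGT_zero μ hb)
  · simpa only [sub_self] using
      ((cdf μ).tendsto_div_atTop ha.le).sub ((cdf μ).tendsto_div_atTop hb.le)
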